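/- The function f(t) = -t/4 + (t/2)∫_{2/t}^∞ (x - 2/t)² φ(x) dx satisfies |f'(t)| ≤ 1/4 for all t > 0, where f'(t) = -1/4 + (1/2)∫_{2/t}^∞ (x² - 4/t²) φ(x) dx. -/

import Mathlib

/-!
Write `φ = stdPDF`, `G a = ∫_a^∞ φ` and `a = 2 / t`. Since `φ' = -x φ`, integration by parts
gives `∫_a^∞ x φ = φ a` and `∫_a^∞ x² φ = a φ a + G a`, so every quadratic moment over
`(a, ∞)` has a closed form in `φ a` and `G a`. In particular `f t = -t/4 + (t/2) T(2/t)` with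
`T a = (1 + a²) G a - a φ a`, whose derivative is `2 (a G a - φ a)`; the chain rule gives
`f' t = -1/4 + (T a - a T' a) / 2 = -1/4 + J / 2` with `J = ∫_a^∞ (x² - a²) φ`.
For `a ≥ 0` the integrand of `J` is nonnegative, and `J ≤ ∫_a^∞ x² φ ≤ ∫_0^∞ x² φ = G 0 ≤ 1`.
-/

open Real Set MeasureTheory

/-- standard normal density -/
noncomputable def stdPDF (x : ℝ) : ℝ := Real.exp (-x ^ 2 / 2) / Real.sqrt (2 * Real.pi)

open Filter Topology ProbabilityTheory

lemma stdPDF_eq_gaussianPDFReal : stdPDF = gaussianPDFReal 0 1 := by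
  ext x
  simp [stdPDF, gaussianPDFReal, div_eq_inv_mul]

lemma stdPDF_eq_mul_exp (x : ℝ) :
    stdPDF x = (√(2 * π))⁻¹ * exp (-(1 / 2) * x ^ 2) := by
  rw [stdPDF, div_eq_inv_mul]
  ring_nf

lemma stdPDF_nonneg (x : ℝ) : 0 ≤ stdPDF x := by
  rw [stdPDF_eq_gaussianPDFReal]; exact gaussianPDFReal_nonneg 0 1 x

lemma continuous_stdPDF : Continuous stdPDF := by
  unfold stdPDF; fun_prop

lemma hasDerivAt_stdPDF (x : ℝ) : HasDerivAt stdPDF (-x * stdPDF x) x := by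
  have h : HasDerivAt (fun y : ℝ => -y ^ 2 / 2) (-x) x := by
    simpa [neg_div] using (hasDerivAt_pow 2 x).neg.div_const 2
  exact (h.exp.div_const √(2 * π)).congr_deriv (by rw [stdPDF]; ring)

lemma integral_stdPDF : ∫ x, stdPDF x = 1 := by
  simp [stdPDF_eq_gaussianPDFReal, integral_gaussianPDFReal_eq_one]

lemma integrable_pow_mul_stdPDF (n : ℕ) : Integrable fun x => x ^ n * stdPDF x := by
  have h := (integrable_rpow_mul_exp_neg_mul_sq (b := 1 / 2) (by norm_num)
    (s := n) (by linarith [n.cast_nonneg (α := ℝ)])).const_mul (√(2 * π))⁻¹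
  convert h using 2 with x
  rw [stdPDF_eq_mul_exp, Real.rpow_natCast]
  ring

lemma integrable_stdPDF : Integrable stdPDF := by
  simpa using integrable_pow_mul_stdPDF 0

lemma tendsto_pow_mul_stdPDF_atTop (n : ℕ) :
    Tendsto (fun x => x ^ n * stdPDF x) atTop (𝓝 0) := by
  have hexp : Tendsto (fun x : ℝ => exp (-(1 / 2) * x)) atTop (𝓝 0) :=
    tendsto_exp_atBot.comp (tendsto_id.const_mul_atTop_of_neg (by norm_num))
  have h := ((rpow_mul_exp_neg_mul_sq_isLittleO_exp_neg (b := 1 / 2) (by norm_num) n).isBigO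
    |>.trans_tendsto hexp).const_mul (√(2 * π))⁻¹
  rw [mul_zero] at h
  refine h.congr' ?_
  filter_upwards with x
  rw [stdPDF_eq_mul_exp, Real.rpow_natCast]
  ring

lemma hasDerivAt_integral_Ioi {f : ℝ → ℝ} {a : ℝ} (hf : Integrable f) (ha : ContinuousAt f a) :
    HasDerivAt (fun b => ∫ x in Ioi b, f x) (-f a) a := by
  have h : (fun b => ∫ x in Ioi b, f x) = fun b => (∫ x in Ioi 0, f x) - ∫ x in 0..b, f x := by
    ext b
    rw [← intervalIntegral.integral_Ioi_sub_Ioi' hf.integrableOn hf.integrableOn, sub_sub_cancel]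
  rw [h]
  exact (intervalIntegral.integral_hasDerivAt_right hf.intervalIntegrable
    hf.aestronglyMeasurable.stronglyMeasurableAtFilter ha).const_sub _

noncomputable def stdTail (a : ℝ) : ℝ := ∫ x in Ioi a, stdPDF x

lemma hasDerivAt_stdTail (a : ℝ) : HasDerivAt stdTail (-stdPDF a) a :=
  hasDerivAt_integral_Ioi integrable_stdPDF continuous_stdPDF.continuousAt

lemma stdTail_nonneg (a : ℝ) : 0 ≤ stdTail a :=
  setIntegral_nonneg measurableSet_Ioi fun x _ => stdPDF_nonneg x

lemma stdTail_le_one (a : ℝ) : stdTail a ≤ 1 :=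
  integral_stdPDF ▸ setIntegral_le_integral integrable_stdPDF (Eventually.of_forall stdPDF_nonneg)

lemma integral_Ioi_mul_stdPDF (a : ℝ) : ∫ x in Ioi a, x * stdPDF x = stdPDF a := by
  have h := integral_Ioi_of_hasDerivAt_of_tendsto (a := a) (f := fun x => -stdPDF x)
    (f' := fun x => x * stdPDF x) continuous_stdPDF.neg.continuousWithinAt
    (fun x _ => (hasDerivAt_stdPDF x).neg.congr_deriv (by ring))
    (by simpa using (integrable_pow_mul_stdPDF 1).integrableOn)
    (by simpa using (tendsto_pow_mul_stdPDF_atTop 0).neg)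
  simpa using h

lemma integral_Ioi_sq_mul_stdPDF (a : ℝ) :
    ∫ x in Ioi a, x ^ 2 * stdPDF x = a * stdPDF a + stdTail a := by
  have hderiv (x : ℝ) : HasDerivAt (fun y => -(y * stdPDF y)) ((x ^ 2 - 1) * stdPDF x) x :=
    ((hasDerivAt_id x).mul (hasDerivAt_stdPDF x)).neg.congr_deriv (by simp; ring)
  have hint : Integrable fun x => (x ^ 2 - 1) * stdPDF x := by
    refine ((integrable_pow_mul_stdPDF 2).sub integrable_stdPDF).congr (.of_forall fun x => ?_)
    simp [sub_mul]
  have h := integral_Ioi_of_hasDerivAt_of_tendsto (hderiv a).continuousAt.continuousWithinAt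
    (fun x _ => hderiv x) hint.integrableOn (by simpa using (tendsto_pow_mul_stdPDF_atTop 1).neg)
  simp_rw [sub_mul, one_mul] at h
  rw [integral_sub (integrable_pow_mul_stdPDF 2).integrableOn integrable_stdPDF.integrableOn] at h
  rw [stdTail]
  linarith

lemma integral_Ioi_quadratic_mul_stdPDF (a p q r : ℝ) :
    ∫ x in Ioi a, (p * x ^ 2 + q * x + r) * stdPDF x =
      p * (a * stdPDF a + stdTail a) + q * stdPDF a + r * stdTail a := by
  have h2 := ((integrable_pow_mul_stdPDF 2).const_mul p).integrableOn (s := Ioi a)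
  have h1 := ((integrable_pow_mul_stdPDF 1).const_mul q).integrableOn (s := Ioi a)
  have h0 := (integrable_stdPDF.const_mul r).integrableOn (s := Ioi a)
  simp only [pow_one] at h1
  simp_rw [add_mul, mul_assoc]
  rw [integral_add (by exact h2.add h1) h0, integral_add h2 h1, integral_const_mul,
    integral_const_mul, integral_const_mul, integral_Ioi_sq_mul_stdPDF, integral_Ioi_mul_stdPDF,
    stdTail]

lemma integral_Ioi_sub_sq_mul_stdPDF (a : ℝ) :
    ∫ x in Ioi a, (x - a) ^ 2 * stdPDF x = (1 + a ^ 2) * stdTail a - a * stdPDF a := by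
  convert integral_Ioi_quadratic_mul_stdPDF a 1 (-2 * a) (a ^ 2) using 1
  · congr 1 with x; ring
  · ring

lemma integral_Ioi_sq_sub_sq_mul_stdPDF (a : ℝ) :
    ∫ x in Ioi a, (x ^ 2 - a ^ 2) * stdPDF x = a * stdPDF a + (1 - a ^ 2) * stdTail a := by
  convert integral_Ioi_quadratic_mul_stdPDF a 1 0 (-a ^ 2) using 1
  · congr 1 with x; ring
  · ring

lemma hasDerivAt_integral_Ioi_sub_sq_mul_stdPDF (a : ℝ) :
    HasDerivAt (fun b => ∫ x in Ioi b, (x - b) ^ 2 * stdPDF x)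
      (2 * (a * stdTail a - stdPDF a)) a := by
  simp only [integral_Ioi_sub_sq_mul_stdPDF]
  have h := (((hasDerivAt_id a).pow 2).const_add 1).mul (hasDerivAt_stdTail a) |>.sub
    ((hasDerivAt_id a).mul (hasDerivAt_stdPDF a))
  exact h.congr_deriv (by simp; ring)

lemma integral_Ioi_sq_sub_sq_mul_stdPDF_nonneg {a : ℝ} (ha : 0 ≤ a) :
    0 ≤ ∫ x in Ioi a, (x ^ 2 - a ^ 2) * stdPDF x :=
  setIntegral_nonneg measurableSet_Ioi fun x hx =>
    mul_nonneg (by nlinarith [mem_Ioi.1 hx]) (stdPDF_nonneg x)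

lemma integral_Ioi_sq_sub_sq_mul_stdPDF_le_one {a : ℝ} (ha : 0 ≤ a) :
    ∫ x in Ioi a, (x ^ 2 - a ^ 2) * stdPDF x ≤ 1 :=
  calc ∫ x in Ioi a, (x ^ 2 - a ^ 2) * stdPDF x
      = a * stdPDF a + (1 - a ^ 2) * stdTail a := integral_Ioi_sq_sub_sq_mul_stdPDF a
    _ ≤ a * stdPDF a + stdTail a := by nlinarith [stdTail_nonneg a]
    _ = ∫ x in Ioi a, x ^ 2 * stdPDF x := (integral_Ioi_sq_mul_stdPDF a).symm
    _ ≤ ∫ x in Ioi 0, x ^ 2 * stdPDF x :=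
        setIntegral_mono_set (integrable_pow_mul_stdPDF 2).integrableOn
          (ae_of_all _ fun x => mul_nonneg (sq_nonneg x) (stdPDF_nonneg x))
          (Ioi_subset_Ioi ha).eventuallyLE
    _ = stdTail 0 := by simp [integral_Ioi_sq_mul_stdPDF]
    _ ≤ 1 := stdTail_le_one 0

theorem f_deriv_bound
    (f : ℝ → ℝ)
    (hf : ∀ t : ℝ, 0 < t →
      f t = -t / 4 + t / 2 * ∫ x in Set.Ioi (2 / t), (x - 2 / t) ^ 2 * stdPDF x) :
    ∀ t : ℝ, 0 < t →
      HasDerivAt f (-1 / 4 + 1 / 2 * ∫ x in Set.Ioi (2 / t), (x ^ 2 - 4 / t ^ 2) * stdPDF x) t ∧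
      |(-1 / 4 + 1 / 2 * ∫ x in Set.Ioi (2 / t), (x ^ 2 - 4 / t ^ 2) * stdPDF x)| ≤ 1 / 4 := by
  intro t ht
  have hsq : ∫ x in Ioi (2 / t), (x ^ 2 - 4 / t ^ 2) * stdPDF x =
      ∫ x in Ioi (2 / t), (x ^ 2 - (2 / t) ^ 2) * stdPDF x := by
    rw [div_pow]; norm_num
  rw [hsq]
  refine ⟨?_, abs_le.2 ⟨?_, ?_⟩⟩
  · have hinv : HasDerivAt (fun s : ℝ => 2 / s) (-2 / t ^ 2) t := by
      exact ((hasDerivAt_const t 2).div (hasDerivAt_id t) ht.ne').congr_deriv (by simp)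
    have hF := ((hasDerivAt_id t).neg.div_const 4).add (((hasDerivAt_id t).div_const 2).mul
      ((hasDerivAt_integral_Ioi_sub_sq_mul_stdPDF (2 / t)).comp t hinv))
    have hf_eq : f =ᶠ[𝓝 t]
        fun s => -s / 4 + s / 2 * ∫ x in Ioi (2 / s), (x - 2 / s) ^ 2 * stdPDF x :=
      eventually_of_mem (Ioi_mem_nhds ht) hf
    refine (hF.congr_of_eventuallyEq hf_eq).congr_deriv ?_
    simp only [Function.comp_apply, id]
    rw [integral_Ioi_sub_sq_mul_stdPDF, integral_Ioi_sq_sub_sq_mul_stdPDF]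
    field_simp
    ring
  · linarith [integral_Ioi_sq_sub_sq_mul_stdPDF_nonneg (a := 2 / t) (by positivity)]
  · linarith [integral_Ioi_sq_sub_sq_mul_stdPDF_le_one (a := 2 / t) (by positivity)]
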